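/- Let A, A_r be real n×n matrices, B, B_r real n×m matrices, K_x, K̂_x real m×n matrices, K_r, K̂_r real m×m matrices satisfying the matching conditions A + B·K_x = A_r and B·K_r = B_r. Let x, x_r, d : ℝ → ℝⁿ and r : ℝ → ℝᵐ, and u, v, Δu : ℝ → ℝᵐ with v(t) = K̂_x·x(t) + K̂_r·r(t) and Δu(t) = u(t) − v(t). Fix t ∈ ℝ and suppose x has derivative A·x(t) + B·u(t) + d(t) at t and x_r has derivative A_r·x_r(t) + B_r·r(t) at t. Then e := x − x_r has derivative A_r·e(t) + B·(K̂_x − K_x)·x(t) + B·(K̂_r − K_r)·r(t) + B·Δu(t) + d(t) at t. -/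

import Mathlib

open Matrix

theorem plant_sub_reference_eq_error_dynamics {R ι κ : Type*} [Ring R] [Fintype ι] [Fintype κ]
    (A A_r : Matrix ι ι R) (B B_r : Matrix ι κ R) (Kx Kxh : Matrix κ ι R)
    (Kr Krh : Matrix κ κ R) (hmc1 : A + B * Kx = A_r) (hmc2 : B * Kr = B_r)
    (x x_r d : ι → R) (r u : κ → R) :
    A *ᵥ x + B *ᵥ u + d - (A_r *ᵥ x_r + B_r *ᵥ r) =
      A_r *ᵥ (x - x_r) + B *ᵥ ((Kxh - Kx) *ᵥ x) + B *ᵥ ((Krh - Kr) *ᵥ r)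
        + B *ᵥ (u - (Kxh *ᵥ x + Krh *ᵥ r)) + d := by
  subst hmc1 hmc2
  simp only [add_mulVec, sub_mulVec, mulVec_add, mulVec_sub, mulVec_mulVec]
  abel

/-- Closed-loop tracking error dynamics (equation (13) of the paper): if the plant
satisfies `ẋ = Ax + Bu + d`, the reference model satisfies `ẋ_r = A_r x_r + B_r r`,
the matching conditions `A + BK_x = A_r`, `BK_r = B_r` hold, the auxiliary control is
`v = K̂_x x + K̂_r r`, and `Δu = u − v`, then `e := x − x_r` satisfies
`ė = A_r e + B(K̂_x − K_x)x + B(K̂_r − K_r)r + BΔu + d` at the instant `t`. -/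
theorem stmt8 {n m : ℕ}
    (A A_r : Matrix (Fin n) (Fin n) ℝ) (B B_r : Matrix (Fin n) (Fin m) ℝ)
    (Kx Kxh : Matrix (Fin m) (Fin n) ℝ) (Kr Krh : Matrix (Fin m) (Fin m) ℝ)
    (hmc1 : A + B * Kx = A_r) (hmc2 : B * Kr = B_r)
    (x x_r d : ℝ → Fin n → ℝ) (r u v Δu : ℝ → Fin m → ℝ)
    (hv : ∀ s : ℝ, v s = Kxh.mulVec (x s) + Krh.mulVec (r s))
    (hΔu : ∀ s : ℝ, Δu s = u s - v s)
    (t : ℝ)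
    (hx : HasDerivAt x (A.mulVec (x t) + B.mulVec (u t) + d t) t)
    (hxr : HasDerivAt x_r (A_r.mulVec (x_r t) + B_r.mulVec (r t)) t) :
    HasDerivAt (fun τ => x τ - x_r τ)
      (A_r.mulVec (x t - x_r t) + B.mulVec ((Kxh - Kx).mulVec (x t))
        + B.mulVec ((Krh - Kr).mulVec (r t)) + B.mulVec (Δu t) + d t) t := by
  rw [hΔu, hv, ← plant_sub_reference_eq_error_dynamics A A_r B B_r Kx Kxh Kr Krh hmc1 hmc2]
  exact hx.sub hxr
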